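/- Let a > 0, t := (0,0,a), s(θ,φ) := a(cos θ sin φ, sin θ sin φ, cos φ), and N(θ,φ) := s(θ,φ)/a. Define Γ_{pq} := −(1/(4π)) ∫₀^{2π} ∫₀^{π} (s_p(θ,φ) − t_p) N_q(θ,φ) / ‖s(θ,φ) − t‖³ · a² sin φ dφ dθ for 1 ≤ p,q ≤ 3. Then Γ_{33} = 1/6. -/

import Mathlib

noncomputable section

open Real MeasureTheory
open scoped BigOperators RealInnerProductSpace

/-- ℝ³ with the Euclidean norm. -/
abbrev R3 : Type := EuclideanSpace ℝ (Fin 3)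

/-- ℂ³ (componentwise). -/
abbrev C3 : Type := Fin 3 → ℂ

/-- The j-th partial derivative of a complex-valued function on ℝ³. -/
def pd (j : Fin 3) (f : R3 → ℂ) (x : R3) : ℂ :=
  fderiv ℝ f x (EuclideanSpace.single j 1)

/-- curl F = (∂₂F₃ − ∂₃F₂, ∂₃F₁ − ∂₁F₃, ∂₁F₂ − ∂₂F₁) (0-indexed). -/
def curl (F : R3 → C3) (x : R3) : C3 :=
  ![pd 1 (fun y => F y 2) x - pd 2 (fun y => F y 1) x,
    pd 2 (fun y => F y 0) x - pd 0 (fun y => F y 2) x,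
    pd 0 (fun y => F y 1) x - pd 1 (fun y => F y 0) x]

/-- The gradient (∂₁f, ∂₂f, ∂₃f) as a vector in ℂ³. -/
def grad (f : R3 → ℂ) (x : R3) : C3 := fun j => pd j f x

/-- The outgoing Green's function of the Helmholtz operator with wave number k. -/
def g (k : ℝ) (x y : R3) : ℂ :=
  Complex.exp (Complex.I * k * ‖x - y‖) / (4 * Real.pi * ‖x - y‖)

/-- The Euclidean norm on ℂ³. -/
def norm3 (v : C3) : ℝ := ‖(WithLp.equiv 2 (Fin 3 → ℂ)).symm v‖

/-- Spherical parametrization s(θ,φ) of the sphere of radius a centered at the origin. -/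
def sph (a θ φ : ℝ) : R3 :=
  WithLp.toLp 2 ![a * (Real.cos θ * Real.sin φ), a * (Real.sin θ * Real.sin φ), a * Real.cos φ]

/-- The north pole t = (0,0,a). -/
def tpole (a : ℝ) : R3 := WithLp.toLp 2 ![0, 0, a]

/-- The matrix Γ_{pq} = ∫_S (∂g₀(s,t)/∂s_p) N_q(s) ds for the sphere of radius a
centered at the origin, with t = (0,0,a), N = s/a, in spherical coordinates. -/
def Gam (a : ℝ) (p q : Fin 3) : ℝ :=
  -(1 / (4 * Real.pi)) *
    ∫ θ in (0:ℝ)..(2 * Real.pi), ∫ φ in (0:ℝ)..Real.pi,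
      (sph a θ φ p - tpole a p) * ((a⁻¹ • sph a θ φ) q) /
          ‖sph a θ φ - tpole a‖ ^ 3 * a ^ 2 * Real.sin φ


/-! The chord from the north pole to `s(θ, φ)` has length `2a sin(φ/2)`, and in half-angle
form the integrand of `Γ₃₃` collapses to `-cos φ cos(φ/2) / 2`, independent of `θ`. Its
`φ`-integral is `-1/3`, so `Γ₃₃ = -(1/4π) · 2π · (-1/3) = 1/6`. -/

open Set

def gamIntegrand (a : ℝ) (p q : Fin 3) (θ φ : ℝ) : ℝ :=
  (sph a θ φ p - tpole a p) * ((a⁻¹ • sph a θ φ) q) / ‖sph a θ φ - tpole a‖ ^ 3 * a ^ 2 * sin φ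

lemma Gam_eq_integral_gamIntegrand (a : ℝ) (p q : Fin 3) :
    Gam a p q = -(1 / (4 * π)) * ∫ θ in (0 : ℝ)..2 * π, ∫ φ in (0 : ℝ)..π, gamIntegrand a p q θ φ :=
  rfl

lemma norm_sph_sub_tpole (a θ φ : ℝ) :
    ‖sph a θ φ - tpole a‖ = 2 * |a| * |sin (φ / 2)| := by
  obtain ⟨u, rfl⟩ : ∃ u, φ = 2 * u := ⟨φ / 2, by ring⟩
  rw [mul_div_cancel_left₀ u two_ne_zero, EuclideanSpace.norm_eq,
    show 2 * |a| * |sin u| = |2 * a * sin u| by simp [abs_mul], ← sqrt_sq_eq_abs]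
  congr 1
  simp only [Fin.sum_univ_three, PiLp.sub_apply, sph, tpole, Real.norm_eq_abs, sq_abs,
    Matrix.cons_val_zero, Matrix.cons_val_one, Matrix.cons_val_two, Matrix.head_cons,
    Matrix.tail_cons, sin_two_mul, cos_two_mul']
  linear_combination (4 * a ^ 2 * sin u ^ 2 * cos u ^ 2) * sin_sq_add_cos_sq θ +
    (a ^ 2 * (sin u ^ 2 + cos u ^ 2 - 1)) * sin_sq_add_cos_sq u

lemma gamIntegrand_two_two {a φ : ℝ} (θ : ℝ) (ha : 0 < a) (hφ : 0 < sin (φ / 2)) :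
    gamIntegrand a 2 2 θ φ = -(cos φ * cos (φ / 2)) / 2 := by
  rw [gamIntegrand, norm_sph_sub_tpole, abs_of_pos ha, abs_of_pos hφ]
  obtain ⟨u, rfl⟩ : ∃ u, φ = 2 * u := ⟨φ / 2, by ring⟩
  rw [mul_div_cancel_left₀ u two_ne_zero] at hφ ⊢
  simp only [sph, tpole, PiLp.toLp_apply, PiLp.smul_apply, smul_eq_mul, Matrix.cons_val_two,
    Matrix.tail_cons, Matrix.head_cons, sin_two_mul, cos_two_mul']
  field_simp
  linear_combination cos u * (cos u ^ 2 - sin u ^ 2) * sin_sq_add_cos_sq u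

lemma integral_cos_mul_cos_half : ∫ φ in (0 : ℝ)..π, cos φ * cos (φ / 2) = 2 / 3 := by
  have hsum : ∀ φ, cos φ * cos (φ / 2) = (cos (3 / 2 * φ) + cos (1 / 2 * φ)) / 2 := by
    intro φ
    rw [show 3 / 2 * φ = φ + φ / 2 by ring, show 1 / 2 * φ = φ - φ / 2 by ring, cos_add, cos_sub]
    ring
  simp_rw [hsum]
  rw [intervalIntegral.integral_div, intervalIntegral.integral_add
      (Continuous.intervalIntegrable (by fun_prop) _ _)
      (Continuous.intervalIntegrable (by fun_prop) _ _),
    intervalIntegral.integral_comp_mul_left cos (by norm_num : (3 / 2 : ℝ) ≠ 0),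
    intervalIntegral.integral_comp_mul_left cos (by norm_num : (1 / 2 : ℝ) ≠ 0), integral_cos,
    integral_cos, show 3 / 2 * π = π / 2 + π by ring, sin_add_pi, sin_pi_div_two,
    show 1 / 2 * π = π / 2 by ring, sin_pi_div_two]
  norm_num

lemma integral_gamIntegrand_two_two {a : ℝ} (θ : ℝ) (ha : 0 < a) :
    ∫ φ in (0 : ℝ)..π, gamIntegrand a 2 2 θ φ = -(1 / 3) := by
  have hpt : ∀ φ ∈ uIoc 0 π, gamIntegrand a 2 2 θ φ = -(cos φ * cos (φ / 2)) / 2 := by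
    rw [uIoc_of_le pi_pos.le]
    rintro φ ⟨hφ₀, hφπ⟩
    exact gamIntegrand_two_two θ ha (sin_pos_of_pos_of_lt_pi (by linarith) (by linarith))
  rw [intervalIntegral.integral_congr_ae (.of_forall hpt), intervalIntegral.integral_div,
    intervalIntegral.integral_neg, integral_cos_mul_cos_half]
  norm_num

/-- Γ₃₃ = 1/6 for the sphere of radius a > 0. -/
theorem Gamma_diag_third (a : ℝ) (ha : 0 < a) :
    Gam a 2 2 = 1 / 6 := by
  have hπ := pi_pos.ne'
  rw [Gam_eq_integral_gamIntegrand,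
    intervalIntegral.integral_congr fun θ _ => integral_gamIntegrand_two_two θ ha,
    intervalIntegral.integral_const, smul_eq_mul]
  field_simp
  ring
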